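/- arXiv:1807.04634 — 5 statements merged into one kernel-verified Lean document; each statement's English description precedes it below -/
import Mathlib

section
/- Let F : ℝⁿ × ℝⁿ → ℝⁿ be a continuously differentiable force and define R(q,v) = ∫₀¹ ⟨F(q, s·v), v⟩ ds. Then for every (q,v) ∈ ℝⁿ × ℝⁿ, the derivative of R in the velocity variable evaluated in the direction v equals the power of F, i.e. Σᵢ (∂R/∂vⁱ)(q,v) · vⁱ = ⟨F(q,v), v⟩. -/
/-!
Along the ray `c ↦ c • v` the substitution `u = s c` gives
`R (q, c • v) = ∫₀^c ⟪F (q, u • v), v⟫ du`, whose derivative at `c = 1` is `⟪F (q, v), v⟫` by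
the fundamental theorem of calculus. Differentiating under the integral sign shows that `R (q, ·)`
is differentiable, so this derivative along the ray is `D_v R (q, v) v`.
-/

open RealInnerProductSpace Set
open scoped Topology Interval

section ParametricIntegral

variable {H E : Type*} [NormedAddCommGroup H] [NormedSpace ℝ H]
  [NormedAddCommGroup E] [NormedSpace ℝ E]

/-- The tube lemma turns the bound of the derivative on `{x₀} × [a, b]` into a bound on
`U × [a, b]` for a neighbourhood `U` of `x₀`, which is the domination needed to differentiate
under the integral sign. -/
theorem hasFDerivAt_intervalIntegral_of_contDiff {f : H → ℝ → E}
    (hf : ContDiff ℝ 1 (Function.uncurry f)) (a b : ℝ) (x₀ : H) :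
    HasFDerivAt (fun x => ∫ t in a..b, f x t)
      (∫ t in a..b, fderiv ℝ (fun x => f x t) x₀) x₀ := by
  set D := fderiv ℝ (Function.uncurry f)
  have hD : Continuous D := hf.continuous_fderiv one_ne_zero
  have h_diff : ∀ t x, HasFDerivAt (fun x => f x t) ((D (x, t)).comp (.inl ℝ H ℝ)) x :=
    fun t x => ((hf.differentiable one_ne_zero) (x, t)).hasFDerivAt.comp (f := fun x => (x, t))
      x (hasFDerivAt_prodMk_left x t)
  obtain ⟨C, hC⟩ := isCompact_uIcc.exists_bound_of_continuousOn (f := fun t => D (x₀, t))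
    (by fun_prop)
  have h_near : ∀ᶠ x in 𝓝 x₀, ∀ t ∈ [[a, b]], ‖D (x, t)‖ < C + 1 :=
    isCompact_uIcc.eventually_forall_of_forall_eventually fun t ht =>
      hD.norm.continuousAt.eventually_lt continuousAt_const (by linarith [hC t ht])
  have h_cont : ∀ x, Continuous (f x) := fun x => hf.continuous.uncurry_left x
  simp only [fun t => (h_diff t x₀).fderiv]
  -- otherwise instance search gets lost looking for second countability of `H →L[ℝ] E`
  have := secondCountableTopologyEither_of_left ℝ (H →L[ℝ] E)
  refine intervalIntegral.hasFDerivAt_integral_of_dominated_of_fderiv_le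
    (F' := fun x t => (D (x, t)).comp (.inl ℝ H ℝ)) (bound := fun _ => C + 1) h_near
    (.of_forall fun x => (h_cont x).aestronglyMeasurable) ((h_cont x₀).intervalIntegrable _ _)
    ((hD.comp (Continuous.prodMk_right x₀)).clm_comp_const _).aestronglyMeasurable
    (.of_forall fun t ht x hx => ?_)
    intervalIntegrable_const (.of_forall fun t _ x _ => h_diff t x)
  calc ‖(D (x, t)).comp (.inl ℝ H ℝ)‖ ≤ ‖D (x, t)‖ * ‖ContinuousLinearMap.inl ℝ H ℝ‖ :=
        ContinuousLinearMap.opNorm_comp_le _ _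
    _ ≤ ‖D (x, t)‖ * 1 := by gcongr; exact ContinuousLinearMap.norm_inl_le_one _ _ _
    _ ≤ C + 1 := by linarith [hx t (uIoc_subset_uIcc ht)]

end ParametricIntegral

theorem HasFDerivAt.apply_self_eq_of_hasDerivAt_smul {H E : Type*} [NormedAddCommGroup H]
    [NormedSpace ℝ H] [NormedAddCommGroup E] [NormedSpace ℝ E] {f : H → E} {L : H →L[ℝ] E}
    {v : H} {y : E} (hf : HasFDerivAt f L v) (hray : HasDerivAt (fun c : ℝ => f (c • v)) y 1) :
    L v = y := by
  have hv : HasFDerivAt f L ((1 : ℝ) • v) := by rwa [one_smul]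
  have := hv.comp_hasDerivAt (1 : ℝ) ((hasDerivAt_id (1 : ℝ)).smul_const v)
  simp only [one_smul] at this
  exact this.unique hray

section Rayleigh

variable {E : Type*} [NormedAddCommGroup E] [InnerProductSpace ℝ E]

noncomputable def rayleighFunction (g : E → E) (w : E) : ℝ :=
  ∫ s in (0 : ℝ)..1, ⟪g (s • w), w⟫

theorem rayleighFunction_smul (g : E → E) (v : E) (c : ℝ) :
    rayleighFunction g (c • v) = ∫ u in (0 : ℝ)..c, ⟪g (u • v), v⟫ := by
  have h := intervalIntegral.smul_integral_comp_mul_right (fun u => ⟪g (u • v), v⟫) c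
    (a := 0) (b := 1)
  simp only [zero_mul, one_mul, smul_eq_mul] at h
  rw [← h, rayleighFunction, ← intervalIntegral.integral_const_mul]
  congr 1 with s
  rw [real_inner_smul_right, smul_smul]

theorem differentiable_rayleighFunction {g : E → E} (hg : ContDiff ℝ 1 g) :
    Differentiable ℝ (rayleighFunction g) := fun v =>
  (hasFDerivAt_intervalIntegral_of_contDiff (f := fun w s => ⟪g (s • w), w⟫)
    ((hg.comp (contDiff_snd.smul contDiff_fst)).inner ℝ contDiff_fst) 0 1 v).differentiableAt

theorem fderiv_rayleighFunction_apply_self {g : E → E} (hg : ContDiff ℝ 1 g) (v : E) :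
    fderiv ℝ (rayleighFunction g) v v = ⟪g v, v⟫ := by
  refine (differentiable_rayleighFunction hg v).hasFDerivAt.apply_self_eq_of_hasDerivAt_smul ?_
  have h_cont : Continuous fun u : ℝ => ⟪g (u • v), v⟫ := by fun_prop
  simp only [rayleighFunction_smul]
  simpa only [one_smul] using (h_cont.integral_hasStrictDerivAt 0 1).hasDerivAt

end Rayleigh

/-- For a continuously differentiable force `F` and `R(q,v) = ∫₀¹ ⟨F(q, s·v), v⟩ ds`,
the derivative of `R` in the velocity variable, evaluated in the direction `v`, equals the
power `⟨F(q,v), v⟩` of the force. -/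
theorem rayleigh_function_power_identity
    (n : ℕ)
    (F : EuclideanSpace ℝ (Fin n) × EuclideanSpace ℝ (Fin n) → EuclideanSpace ℝ (Fin n))
    (hF : ContDiff ℝ 1 F)
    (R : EuclideanSpace ℝ (Fin n) × EuclideanSpace ℝ (Fin n) → ℝ)
    (hR : ∀ q v : EuclideanSpace ℝ (Fin n),
      R (q, v) = ∫ s in (0:ℝ)..1, ⟪F (q, s • v), v⟫) :
    ∀ q v : EuclideanSpace ℝ (Fin n),
      fderiv ℝ (fun w => R (q, w)) v v = ⟪F (q, v), v⟫ := by
  intro q v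
  have hRq : (fun w => R (q, w)) = rayleighFunction fun w => F (q, w) := funext (hR q)
  rw [hRq]
  exact fderiv_rayleighFunction_apply_self (hF.comp (contDiff_const.prodMk contDiff_id)) v
end

section
/- Let F : ℝⁿ × ℝⁿ → ℝⁿ be a continuously differentiable force, let R(q,v) = ∫₀¹ ⟨F(q, s·v), v⟩ ds, and suppose R̃ : ℝⁿ × ℝⁿ → ℝ is a differentiable function satisfying Σᵢ (∂R̃/∂vⁱ)(q,v) · vⁱ = ⟨F(q,v), v⟩ for all (q,v). Then there exists a function f : ℝⁿ → ℝ such that R̃(q,v) = R(q,v) + f(q) for all (q,v) ∈ ℝⁿ × ℝⁿ; in particular the difference R̃ − R depends only on the position variable q. -/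
open RealInnerProductSpace

/-!
Along the ray `s ↦ s • v` the hypothesis on `R̃` reads `s · ∂ₛ R̃(q, s v) = s · ⟪F(q, s v), v⟫`,
so for `s ≠ 0` the derivative of `s ↦ R̃(q, s v)` is the integrand defining `R(q, v)`. The
fundamental theorem of calculus on `[0, 1]` (the integrand is continuous since `F` is) then gives
`R̃(q, v) - R̃(q, 0) = R(q, v)`, and one takes `f q = R̃(q, 0)`.
-/

section

variable {E : Type*} [NormedAddCommGroup E] [InnerProductSpace ℝ E]

theorem fderiv_smul_apply_eq_of_fderiv_apply_self {φ : E → ℝ} {G : E → E}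
    (h : ∀ w, fderiv ℝ φ w w = ⟪G w, w⟫) {s : ℝ} (hs : s ≠ 0) (v : E) :
    fderiv ℝ φ (s • v) v = ⟪G (s • v), v⟫ := by
  have hsv := h (s • v)
  rw [map_smul, smul_eq_mul, real_inner_smul_right] at hsv
  exact mul_left_cancel₀ hs hsv

theorem sub_apply_zero_eq_integral_of_fderiv_apply_self {φ : E → ℝ} {G : E → E}
    (hφ : Differentiable ℝ φ) (hG : Continuous G)
    (h : ∀ w, fderiv ℝ φ w w = ⟪G w, w⟫) (v : E) :
    φ v - φ 0 = ∫ s in (0 : ℝ)..1, ⟪G (s • v), v⟫ := by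
  have hray : Continuous fun s : ℝ => s • v := continuous_id.smul continuous_const
  have hderiv : ∀ s ∈ Set.Ioo (0 : ℝ) 1,
      HasDerivAt (fun s : ℝ => φ (s • v)) ⟪G (s • v), v⟫ s := by
    intro s hs
    rw [← fderiv_smul_apply_eq_of_fderiv_apply_self h hs.1.ne' v]
    have hray_deriv : HasDerivAt (fun s : ℝ => s • v) v s := by
      simpa using (hasDerivAt_id s).smul_const v
    exact (hφ (s • v)).hasFDerivAt.comp_hasDerivAt s hray_deriv
  have hcont : Continuous fun s : ℝ => ⟪G (s • v), v⟫ :=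
    (hG.comp hray).inner continuous_const
  have ftc := intervalIntegral.integral_eq_sub_of_hasDerivAt_of_le zero_le_one
    (hφ.continuous.comp hray).continuousOn hderiv (hcont.intervalIntegrable 0 1)
  simpa using ftc.symm

end

/-- If `R(q,v) = ∫₀¹ ⟨F(q, s·v), v⟩ ds` and `R̃` is any differentiable function whose velocity
derivative in the direction `v` equals the power `⟨F(q,v), v⟩`, then `R̃ − R` depends only on
the position variable: `R̃(q,v) = R(q,v) + f(q)` for some `f : ℝⁿ → ℝ`. -/
theorem rayleigh_function_unique_up_to_position_function
    (n : ℕ)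
    (F : EuclideanSpace ℝ (Fin n) × EuclideanSpace ℝ (Fin n) → EuclideanSpace ℝ (Fin n))
    (hF : ContDiff ℝ 1 F)
    (R : EuclideanSpace ℝ (Fin n) × EuclideanSpace ℝ (Fin n) → ℝ)
    (hR : ∀ q v : EuclideanSpace ℝ (Fin n),
      R (q, v) = ∫ s in (0:ℝ)..1, ⟪F (q, s • v), v⟫)
    (R' : EuclideanSpace ℝ (Fin n) × EuclideanSpace ℝ (Fin n) → ℝ)
    (hR'diff : Differentiable ℝ R')
    (hR' : ∀ q v : EuclideanSpace ℝ (Fin n),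
      fderiv ℝ (fun w => R' (q, w)) v v = ⟪F (q, v), v⟫) :
    ∃ f : EuclideanSpace ℝ (Fin n) → ℝ,
      ∀ q v : EuclideanSpace ℝ (Fin n), R' (q, v) = R (q, v) + f q := by
  refine ⟨fun q => R' (q, 0), fun q v => ?_⟩
  have hslice : Differentiable ℝ fun w => R' (q, w) :=
    hR'diff.comp ((differentiable_const q).prodMk differentiable_id)
  have hFq : Continuous fun w => F (q, w) :=
    hF.continuous.comp (continuous_const.prodMk continuous_id)
  have ftc := sub_apply_zero_eq_integral_of_fderiv_apply_self hslice hFq (hR' q) v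
  rw [hR q v, ← ftc]
  ring
end

section
/- Let F : ℝⁿ × ℝⁿ → ℝⁿ be a continuously differentiable force. Then there exist a differentiable function R : ℝⁿ × ℝⁿ → ℝ and a gyroscopic force G : ℝⁿ × ℝⁿ → ℝⁿ such that F(q,v) = ∇ᵥR(q,v) + G(q,v) for all (q,v) ∈ ℝⁿ × ℝⁿ; that is, every continuously differentiable force is the sum of a Rayleigh force and a gyroscopic force. -/
/-!
Take `R(q, v) = ∫₀¹ ⟪F(q, t v), v⟫ dt`, the primitive of `F(q, ·)` along rays through the origin:
the substitution `u = s t` gives `R(q, s v) = ∫₀ˢ ⟪F(q, u v), v⟫ du`, so the radial derivative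
`⟪∇ᵥR(q, v), v⟫` is `⟪F(q, v), v⟫`. Hence `G = F - ∇ᵥR` has no radial component, i.e. it is
gyroscopic. Joint differentiability of `R` is differentiation under the integral sign, the
integrand being `C¹` in `(q, v, t)`.
-/

open RealInnerProductSpace

section ParametricIntegral

variable {H E : Type*} [NormedAddCommGroup H] [NormedSpace ℝ H] [ProperSpace H]
  [NormedAddCommGroup E] [NormedSpace ℝ E]

theorem differentiable_intervalIntegral_of_contDiff {f : H × ℝ → E} (hf : ContDiff ℝ 1 f)
    (a b : ℝ) : Differentiable ℝ fun x => ∫ t in a..b, f (x, t) := by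
  intro x₀
  let f' : H → ℝ → H →L[ℝ] E := fun x t => (fderiv ℝ f (x, t)).comp (.inl ℝ H ℝ)
  have hf'_cont : Continuous (fderiv ℝ f) := hf.continuous_fderiv one_ne_zero
  have hasFDerivAt_slice : ∀ x t, HasFDerivAt (fun y => f (y, t)) (f' x t) x := fun x t =>
    ((hf.differentiable one_ne_zero) (x, t)).hasFDerivAt.comp x (hasFDerivAt_prodMk_left x t)
  obtain ⟨C, hC⟩ := ((isCompact_closedBall x₀ 1).prod isCompact_uIcc).exists_bound_of_continuousOn
    hf'_cont.continuousOn
  have hf'_le : ∀ t ∈ Set.uIoc a b, ∀ x ∈ Metric.ball x₀ 1, ‖f' x t‖ ≤ C := fun t ht x hx =>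
    calc ‖f' x t‖ ≤ ‖fderiv ℝ f (x, t)‖ * ‖ContinuousLinearMap.inl ℝ H ℝ‖ :=
          ContinuousLinearMap.opNorm_comp_le _ _
      _ ≤ ‖fderiv ℝ f (x, t)‖ :=
          mul_le_of_le_one_right (norm_nonneg _) (ContinuousLinearMap.norm_inl_le_one _ _ _)
      _ ≤ C := hC _ ⟨Metric.ball_subset_closedBall hx, Set.uIoc_subset_uIcc ht⟩
  have hslice_cont : ∀ x, Continuous fun t => f (x, t) := fun x =>
    hf.continuous.comp (continuous_const.prodMk continuous_id)
  exact (intervalIntegral.hasFDerivAt_integral_of_dominated_of_fderiv_le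
    (Metric.ball_mem_nhds x₀ one_pos)
    (.of_forall fun x => (hslice_cont x).aestronglyMeasurable)
    ((hslice_cont x₀).intervalIntegrable a b)
    ((hf'_cont.comp (continuous_const.prodMk continuous_id)).clm_comp
      continuous_const).aestronglyMeasurable
    (.of_forall hf'_le) intervalIntegrable_const
    (.of_forall fun t _ x _ => hasFDerivAt_slice x t)).differentiableAt

end ParametricIntegral

section RadialPotential

variable {V : Type*} [NormedAddCommGroup V] [InnerProductSpace ℝ V]

noncomputable def radialPotential (F : V → V) (v : V) : ℝ := ∫ t in (0 : ℝ)..1, ⟪F (t • v), v⟫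

theorem radialPotential_smul (F : V → V) (v : V) (s : ℝ) :
    radialPotential F (s • v) = ∫ u in (0 : ℝ)..s, ⟪F (u • v), v⟫ := by
  calc radialPotential F (s • v) = s * ∫ t in (0 : ℝ)..1, ⟪F ((s * t) • v), v⟫ := by
        simp only [radialPotential, smul_smul, real_inner_smul_right,
          intervalIntegral.integral_const_mul, mul_comm]
    _ = ∫ u in (0 : ℝ)..s, ⟪F (u • v), v⟫ := by
        simpa using intervalIntegral.mul_integral_comp_mul_left
          (f := fun u => ⟪F (u • v), v⟫) (a := 0) (b := 1) (c := s)

theorem hasDerivAt_radialPotential_smul {F : V → V} (hF : Continuous F) (v : V) :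
    HasDerivAt (fun s : ℝ => radialPotential F (s • v)) ⟪F v, v⟫ 1 := by
  have hcont : Continuous fun u : ℝ => ⟪F (u • v), v⟫ :=
    (hF.comp (continuous_id.smul continuous_const)).inner continuous_const
  simp_rw [radialPotential_smul]
  simpa using intervalIntegral.integral_hasDerivAt_right (hcont.intervalIntegrable 0 1)
    (hcont.stronglyMeasurableAtFilter _ _) hcont.continuousAt

theorem HasGradientAt.inner_radialPotential_self {F : V → V} {g v : V} [CompleteSpace V]
    (hF : Continuous F) (hg : HasGradientAt (radialPotential F) g v) : ⟪g, v⟫ = ⟪F v, v⟫ := by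
  have hline : HasDerivAt (fun s : ℝ => s • v) v 1 := by
    simpa using (hasDerivAt_id (1 : ℝ)).smul_const v
  exact ((hasGradientAt_iff_hasFDerivAt.mp hg).comp_hasDerivAt_of_eq 1 hline
    (one_smul ℝ v).symm).unique (hasDerivAt_radialPotential_smul hF v)

theorem differentiable_radialPotential_of_contDiff {W : Type*} [NormedAddCommGroup W]
    [NormedSpace ℝ W] [ProperSpace W] [ProperSpace V] {F : W × V → V} (hF : ContDiff ℝ 1 F) :
    Differentiable ℝ fun p : W × V => radialPotential (fun w => F (p.1, w)) p.2 :=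
  differentiable_intervalIntegral_of_contDiff
    ((hF.comp (contDiff_fst.fst.prodMk (contDiff_snd.smul contDiff_fst.snd))).inner ℝ
      contDiff_fst.snd) 0 1

end RadialPotential

/-- Every continuously differentiable force `F : ℝⁿ × ℝⁿ → ℝⁿ` is the sum of a Rayleigh force
`∇ᵥR` and a gyroscopic force `G`. -/
theorem force_decomposition_exists
    (n : ℕ)
    (F : EuclideanSpace ℝ (Fin n) × EuclideanSpace ℝ (Fin n) → EuclideanSpace ℝ (Fin n))
    (hF : ContDiff ℝ 1 F) :
    ∃ (R : EuclideanSpace ℝ (Fin n) × EuclideanSpace ℝ (Fin n) → ℝ)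
      (G : EuclideanSpace ℝ (Fin n) × EuclideanSpace ℝ (Fin n) → EuclideanSpace ℝ (Fin n)),
      Differentiable ℝ R ∧
      (∀ q v : EuclideanSpace ℝ (Fin n), ⟪G (q, v), v⟫ = 0) ∧
      (∀ q v : EuclideanSpace ℝ (Fin n),
        F (q, v) = gradient (fun w => R (q, w)) v + G (q, v)) := by
  set R := fun p : EuclideanSpace ℝ (Fin n) × EuclideanSpace ℝ (Fin n) =>
    radialPotential (fun w => F (p.1, w)) p.2
  have hR : Differentiable ℝ R := differentiable_radialPotential_of_contDiff hF
  refine ⟨R, fun p => F p - gradient (fun w => R (p.1, w)) p.2, hR, fun q v => ?_,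
    fun q v => (add_sub_cancel _ _).symm⟩
  have hgrad : HasGradientAt (fun w => R (q, w)) (gradient (fun w => R (q, w)) v) v :=
    (hR.comp (differentiable_const q |>.prodMk differentiable_id) v).hasGradientAt
  have hFq : Continuous fun w => F (q, w) := hF.continuous.comp (by fun_prop)
  change ⟪F (q, v) - gradient (fun w => R (q, w)) v, v⟫ = 0
  rw [inner_sub_left, hgrad.inner_radialPotential_self hFq, sub_self]
end

section
/- Let F : ℝⁿ × ℝⁿ → ℝⁿ be a continuously differentiable force, and suppose F = ∇ᵥR + G = ∇ᵥR̃ + G̃ where R, R̃ : ℝⁿ × ℝⁿ → ℝ are differentiable functions and G, G̃ : ℝⁿ × ℝⁿ → ℝⁿ are gyroscopic forces. Then ∇ᵥR(q,v) = ∇ᵥR̃(q,v) and G(q,v) = G̃(q,v) for all (q,v) ∈ ℝⁿ × ℝⁿ; that is, the decomposition of a force into the sum of a Rayleigh force and a gyroscopic force is unique. -/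
/-!
Fix the position `q` and compare the two decompositions on the fibre. The difference
`D = R(q, ·) - R̃(q, ·)` has gradient `G̃(q, ·) - G(q, ·)`, which is orthogonal to the velocity, so
the radial derivative `d/dt D(eᵗ v) = ⟪∇D(eᵗ v), eᵗ v⟫` vanishes. Hence `D(v) = D(eᵗ v) → D(0)` as
`t → -∞`: `D` is constant, its gradient vanishes, and both parts of the decomposition agree.
-/

open RealInnerProductSpace Filter Topology

section Gradient

variable {H : Type*} [NormedAddCommGroup H] [InnerProductSpace ℝ H] [CompleteSpace H]

theorem gradient_sub_of_differentiableAt {f g : H → ℝ} {x : H}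
    (hf : DifferentiableAt ℝ f x) (hg : DifferentiableAt ℝ g x) :
    gradient (f - g) x = gradient f x - gradient g x := by
  refine HasGradientAt.gradient (hasGradientAt_iff_hasFDerivAt.2 ?_)
  rw [map_sub]
  exact hf.hasGradientAt.hasFDerivAt.sub hg.hasGradientAt.hasFDerivAt

theorem apply_eq_apply_zero_of_inner_gradient_self_eq_zero {f : H → ℝ}
    (hf : Differentiable ℝ f) (h : ∀ w, ⟪gradient f w, w⟫ = 0) (v : H) : f v = f 0 := by
  set g : ℝ → ℝ := fun t => f (Real.exp t • v)
  have hg : ∀ t, HasDerivAt g 0 t := fun t => by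
    have hd := (hf _).hasGradientAt.hasFDerivAt.comp_hasDerivAt t
      ((Real.hasDerivAt_exp t).smul_const v)
    rwa [InnerProductSpace.toDual_apply_apply, h] at hd
  have hg_const : g = fun _ => f v := funext fun t => by
    simpa [g] using is_const_of_deriv_eq_zero (fun t => (hg t).differentiableAt)
      (fun t => (hg t).deriv) t 0
  have hg_lim : Tendsto g atBot (𝓝 (f 0)) :=
    (hf.continuous.tendsto 0).comp (by simpa using Real.tendsto_exp_atBot.smul_const v)
  rw [hg_const] at hg_lim
  exact tendsto_nhds_unique tendsto_const_nhds hg_lim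

theorem gradient_eq_zero_of_inner_gradient_self_eq_zero {f : H → ℝ}
    (hf : Differentiable ℝ f) (h : ∀ w, ⟪gradient f w, w⟫ = 0) : gradient f = 0 := by
  have hf_const : f = fun _ => f 0 :=
    funext (apply_eq_apply_zero_of_inner_gradient_self_eq_zero hf h)
  rw [hf_const, gradient_fun_const']
  rfl

theorem gradient_eq_and_eq_of_gradient_add_eq_gradient_add {f f' : H → ℝ} {g g' : H → H}
    (hf : Differentiable ℝ f) (hf' : Differentiable ℝ f')
    (hg : ∀ w, ⟪g w, w⟫ = 0) (hg' : ∀ w, ⟪g' w, w⟫ = 0)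
    (h : ∀ w, gradient f w + g w = gradient f' w + g' w) :
    gradient f = gradient f' ∧ g = g' := by
  have hgrad_sub : ∀ w, gradient (f - f') w = g' w - g w := fun w => by
    rw [gradient_sub_of_differentiableAt (hf w) (hf' w)]
    linear_combination (norm := module) h w
  have hgrad_eq : gradient f = gradient f' := by
    have hzero := gradient_eq_zero_of_inner_gradient_self_eq_zero (hf.sub hf')
      fun w => by rw [hgrad_sub, inner_sub_left, hg, hg', sub_zero]
    funext w
    rw [← sub_eq_zero, ← gradient_sub_of_differentiableAt (hf w) (hf' w), hzero, Pi.zero_apply]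
  refine ⟨hgrad_eq, funext fun w => ?_⟩
  simpa [hgrad_eq] using h w

end Gradient

theorem force_decomposition_unique_general
    (n : ℕ)
    (F : EuclideanSpace ℝ (Fin n) × EuclideanSpace ℝ (Fin n) → EuclideanSpace ℝ (Fin n))
    (R R' : EuclideanSpace ℝ (Fin n) × EuclideanSpace ℝ (Fin n) → ℝ)
    (hRdiff : Differentiable ℝ R) (hR'diff : Differentiable ℝ R')
    (G G' : EuclideanSpace ℝ (Fin n) × EuclideanSpace ℝ (Fin n) → EuclideanSpace ℝ (Fin n))
    (hG : ∀ q v : EuclideanSpace ℝ (Fin n), ⟪G (q, v), v⟫ = 0)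
    (hG' : ∀ q v : EuclideanSpace ℝ (Fin n), ⟪G' (q, v), v⟫ = 0)
    (hdec : ∀ q v : EuclideanSpace ℝ (Fin n),
      F (q, v) = gradient (fun w => R (q, w)) v + G (q, v))
    (hdec' : ∀ q v : EuclideanSpace ℝ (Fin n),
      F (q, v) = gradient (fun w => R' (q, w)) v + G' (q, v)) :
    ∀ q v : EuclideanSpace ℝ (Fin n),
      gradient (fun w => R (q, w)) v = gradient (fun w => R' (q, w)) v ∧
      G (q, v) = G' (q, v) := by
  intro q v
  have hfibre := gradient_eq_and_eq_of_gradient_add_eq_gradient_add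
    (f := fun w => R (q, w)) (f' := fun w => R' (q, w)) (g := fun w => G (q, w))
    (g' := fun w => G' (q, w)) (by fun_prop) (by fun_prop) (hG q) (hG' q)
    fun w => (hdec q w).symm.trans (hdec' q w)
  exact ⟨congrFun hfibre.1 v, congrFun hfibre.2 v⟩

/-- The decomposition of a continuously differentiable force into the sum of a Rayleigh force
and a gyroscopic force is unique. -/
theorem force_decomposition_unique
    (n : ℕ)
    (F : EuclideanSpace ℝ (Fin n) × EuclideanSpace ℝ (Fin n) → EuclideanSpace ℝ (Fin n))
    (hF : ContDiff ℝ 1 F)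
    (R R' : EuclideanSpace ℝ (Fin n) × EuclideanSpace ℝ (Fin n) → ℝ)
    (hRdiff : Differentiable ℝ R) (hR'diff : Differentiable ℝ R')
    (G G' : EuclideanSpace ℝ (Fin n) × EuclideanSpace ℝ (Fin n) → EuclideanSpace ℝ (Fin n))
    (hG : ∀ q v : EuclideanSpace ℝ (Fin n), ⟪G (q, v), v⟫ = 0)
    (hG' : ∀ q v : EuclideanSpace ℝ (Fin n), ⟪G' (q, v), v⟫ = 0)
    (hdec : ∀ q v : EuclideanSpace ℝ (Fin n),
      F (q, v) = gradient (fun w => R (q, w)) v + G (q, v))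
    (hdec' : ∀ q v : EuclideanSpace ℝ (Fin n),
      F (q, v) = gradient (fun w => R' (q, w)) v + G' (q, v)) :
    ∀ q v : EuclideanSpace ℝ (Fin n),
      gradient (fun w => R (q, w)) v = gradient (fun w => R' (q, w)) v ∧
      G (q, v) = G' (q, v) :=
  force_decomposition_unique_general n F R R' hRdiff hR'diff G G' hG hG' hdec hdec'
end

section
/- Let S = {(q,v) ∈ ℝ² × ℝ² : v¹ ≠ 0 and v² ≠ 0} and consider the force F on ℝ² given by F(q,v) = (cos(v²)·sgn(v¹), |v²|). Then on S one has F = ∇ᵥR + G, where R(q,v) = (sin(v²)/v²)·|v¹| + (1/2)v²|v²|, so that ∇ᵥR(q,v) = ((sin(v²)/v²)·sgn(v¹), ((cos(v²)v² − sin(v²))/(v²)²)·|v¹| + |v²|), and G(q,v) = (((cos(v²)v² − sin(v²))/v²)·sgn(v¹), −((cos(v²)v² − sin(v²))/(v²)²)·|v¹|) satisfies ⟨G(q,v), v⟩ = 0 for all (q,v) ∈ S. -/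
/-!
Away from the coordinate axes each `|vⁱ|` is smooth with derivative `sgn vⁱ`, so the gradient
of `R` follows from the product and chain rules. The identity `F = ∇ᵥR + G` is then algebra,
and `⟪G, v⟫ = 0` comes down to `sgn(v¹) v¹ = |v¹|`.
-/

open RealInnerProductSpace

theorem Real.sign_eq_cast_sign (x : ℝ) : Real.sign x = (SignType.sign x : ℝ) := by
  rcases lt_trichotomy x 0 with hx | rfl | hx
  · simp [Real.sign_of_neg hx, hx]
  · simp
  · simp [Real.sign_of_pos hx, hx]

theorem Real.sign_mul_self (x : ℝ) : Real.sign x * x = |x| := by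
  rw [Real.sign_eq_cast_sign, _root_.sign_mul_self]

theorem Real.hasDerivAt_abs {x : ℝ} (hx : x ≠ 0) : HasDerivAt (|·|) (Real.sign x) x := by
  simpa only [Real.sign_eq_cast_sign] using _root_.hasDerivAt_abs hx

theorem hasDerivAt_sin_div_self {x : ℝ} (hx : x ≠ 0) :
    HasDerivAt (fun y => Real.sin y / y) ((Real.cos x * x - Real.sin x) / x ^ 2) x := by
  simpa using (Real.hasDerivAt_sin x).fun_div (hasDerivAt_id' x) hx

theorem hasDerivAt_half_mul_self_mul_abs {x : ℝ} (hx : x ≠ 0) :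
    HasDerivAt (fun y : ℝ => 1 / 2 * y * |y|) (|x|) x := by
  refine (((hasDerivAt_id' x).const_mul (1 / 2 : ℝ)).mul (Real.hasDerivAt_abs hx)).congr_deriv ?_
  linear_combination (1 / 2) * Real.sign_mul_self x

theorem EuclideanSpace.toDual_eq_sum_smul_proj {ι : Type*} [Fintype ι]
    (g : EuclideanSpace ℝ ι) :
    InnerProductSpace.toDual ℝ (EuclideanSpace ℝ ι) g = ∑ i, g i • EuclideanSpace.proj i := by
  ext w
  simp [PiLp.inner_apply, mul_comm]

theorem HasDerivAt.comp_euclideanSpace_apply {ι : Type*} [Fintype ι] {φ : ℝ → ℝ} {d : ℝ}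
    {v : EuclideanSpace ℝ ι} {i : ι} (h : HasDerivAt φ d (v i)) :
    HasFDerivAt (fun w : EuclideanSpace ℝ ι => φ (w i)) (d • EuclideanSpace.proj (𝕜 := ℝ) i) v :=
  h.comp_hasFDerivAt v (EuclideanSpace.proj (𝕜 := ℝ) i).hasFDerivAt

theorem hasGradientAt_sin_div_mul_abs_add_half_mul_abs {v : EuclideanSpace ℝ (Fin 2)}
    (hv0 : v 0 ≠ 0) (hv1 : v 1 ≠ 0) :
    HasGradientAt (fun w : EuclideanSpace ℝ (Fin 2) =>
        Real.sin (w 1) / w 1 * |w 0| + 1 / 2 * w 1 * |w 1|)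
      !₂[Real.sin (v 1) / v 1 * Real.sign (v 0),
        (Real.cos (v 1) * v 1 - Real.sin (v 1)) / v 1 ^ 2 * |v 0| + |v 1|] v := by
  rw [hasGradientAt_iff_hasFDerivAt, EuclideanSpace.toDual_eq_sum_smul_proj]
  have hsin := (hasDerivAt_sin_div_self hv1).comp_euclideanSpace_apply (v := v)
  have habs := (Real.hasDerivAt_abs hv0).comp_euclideanSpace_apply (v := v)
  have hhalf := (hasDerivAt_half_mul_self_mul_abs hv1).comp_euclideanSpace_apply (v := v)
  refine ((hsin.mul habs).add hhalf).congr_fderiv ?_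
  ext w
  simp only [add_apply, smul_apply, PiLp.proj_apply, smul_eq_mul, Fin.sum_univ_two,
    Matrix.cons_val_zero, Matrix.cons_val_one, Matrix.cons_val_fin_one]
  ring

/-- On the star-shaped subbundle `S = {(q,v) : v¹ ≠ 0, v² ≠ 0}` of `ℝ² × ℝ²`, the force
`F(q,v) = (cos(v²)·sgn(v¹), |v²|)` decomposes as `F = ∇ᵥR + G`, where
`R(q,v) = (sin(v²)/v²)|v¹| + (1/2)v²|v²|`, so that
`∇ᵥR = ((sin(v²)/v²)·sgn(v¹), ((cos(v²)v² − sin(v²))/(v²)²)|v¹| + |v²|)`, and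
`G = (((cos(v²)v² − sin(v²))/v²)·sgn(v¹), −((cos(v²)v² − sin(v²))/(v²)²)|v¹|)` is
gyroscopic on `S`. -/
theorem force_decomposition_example_coulomb
    (F G : EuclideanSpace ℝ (Fin 2) × EuclideanSpace ℝ (Fin 2) → EuclideanSpace ℝ (Fin 2))
    (R : EuclideanSpace ℝ (Fin 2) × EuclideanSpace ℝ (Fin 2) → ℝ)
    (hF : ∀ q v : EuclideanSpace ℝ (Fin 2),
      F (q, v) 0 = Real.cos (v 1) * Real.sign (v 0) ∧ F (q, v) 1 = |v 1|)
    (hR : ∀ q v : EuclideanSpace ℝ (Fin 2),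
      R (q, v) = (Real.sin (v 1) / v 1) * |v 0| + (1/2) * v 1 * |v 1|)
    (hG : ∀ q v : EuclideanSpace ℝ (Fin 2),
      G (q, v) 0 = ((Real.cos (v 1) * v 1 - Real.sin (v 1)) / v 1) * Real.sign (v 0) ∧
      G (q, v) 1 = -(((Real.cos (v 1) * v 1 - Real.sin (v 1)) / (v 1)^2) * |v 0|)) :
    ∀ q v : EuclideanSpace ℝ (Fin 2), v 0 ≠ 0 → v 1 ≠ 0 →
      gradient (fun w => R (q, w)) v 0 = (Real.sin (v 1) / v 1) * Real.sign (v 0) ∧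
      gradient (fun w => R (q, w)) v 1 =
        ((Real.cos (v 1) * v 1 - Real.sin (v 1)) / (v 1)^2) * |v 0| + |v 1| ∧
      F (q, v) = gradient (fun w => R (q, w)) v + G (q, v) ∧
      ⟪G (q, v), v⟫ = 0 := by
  intro q v hv0 hv1
  have hgrad : gradient (fun w => R (q, w)) v =
      !₂[Real.sin (v 1) / v 1 * Real.sign (v 0),
        (Real.cos (v 1) * v 1 - Real.sin (v 1)) / v 1 ^ 2 * |v 0| + |v 1|] := by
    simp_rw [hR q]
    exact (hasGradientAt_sin_div_mul_abs_add_half_mul_abs hv0 hv1).gradient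
  obtain ⟨hF0, hF1⟩ := hF q v
  obtain ⟨hG0, hG1⟩ := hG q v
  refine ⟨by simp [hgrad], by simp [hgrad], ?_, ?_⟩
  · ext i
    fin_cases i
    · simp only [Fin.zero_eta, Fin.isValue, PiLp.add_apply, hgrad, hF0, hG0, Matrix.cons_val_zero]
      field_simp
      ring
    · simp [hgrad, hF1, hG1]
  · simp only [PiLp.inner_apply, RCLike.inner_apply, conj_trivial, Fin.sum_univ_two, hG0, hG1]
    rw [← Real.sign_mul_self (v 0)]
    field_simp
    ring
end
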